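/- Let Z be a linear subspace of ℝⁿ with Z ≠ {0}, let C ≥ 1, and let 1 ≤ k ≤ n. If for every w ∈ Z and every subset K ⊆ {1,…,n} with |K| = k one has C·‖w_K‖₁ ≤ ‖w_K̄‖₁, then k ≤ n/(C+1). -/

import Mathlib

/-!
Averaging the inequality `C ‖w_K‖₁ ≤ ‖w‖₁ - ‖w_K‖₁` over all `k`-subsets `K`, for a nonzero
`w ∈ Z`: each coordinate lies in `(n-1).choose (k-1)` of the `n.choose k` subsets, so
`(C + 1) (n-1).choose (k-1) ≤ n.choose k`, and `n (n-1).choose (k-1) = k n.choose k` turns this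
into `(C + 1) k ≤ n`.
-/

/-- The ℓ1 norm of a vector in ℝⁿ. -/
noncomputable def l1 {n : ℕ} (x : Fin n → ℝ) : ℝ := ∑ i, |x i|

/-- The restriction of a vector to the coordinates in `K` (zero outside `K`). -/
def restr {n : ℕ} (K : Finset (Fin n)) (x : Fin n → ℝ) : Fin n → ℝ :=
  fun i => if i ∈ K then x i else 0

open Finset

namespace Finset

variable {α M : Type*} [DecidableEq α] [AddCommMonoid M]

theorem card_filter_mem_powersetCard {s : Finset α} {i : α} (hi : i ∈ s) {k : ℕ} (hk : 1 ≤ k) :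
    #((s.powersetCard k).filter (i ∈ ·)) = (#s - 1).choose (k - 1) := by
  simpa only [singleton_subset_iff, card_singleton] using
    card_filter_powersetCard_subset {i} s k (singleton_subset_iff.2 hi) hk

theorem sum_powersetCard_sum (s : Finset α) {k : ℕ} (hk : 1 ≤ k) (f : α → M) :
    ∑ K ∈ s.powersetCard k, ∑ i ∈ K, f i = (#s - 1).choose (k - 1) • ∑ i ∈ s, f i := by
  rw [sum_comm' (t' := s) (s' := fun i => (s.powersetCard k).filter (i ∈ ·)), smul_sum]
  · refine sum_congr rfl fun i hi => ?_
    rw [sum_const, card_filter_mem_powersetCard hi hk]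
  · intro K i
    simp only [mem_powersetCard, mem_filter]
    exact ⟨fun ⟨⟨hKs, hK⟩, hi⟩ => ⟨⟨⟨hKs, hK⟩, hi⟩, hKs hi⟩, fun ⟨hK, _⟩ => hK⟩

end Finset

theorem Nat.mul_choose_sub_one_sub_one {n k : ℕ} (hk : 1 ≤ k) (hkn : k ≤ n) :
    n * (n - 1).choose (k - 1) = n.choose k * k := by
  obtain ⟨n, rfl⟩ := Nat.exists_eq_add_of_le' (hk.trans hkn)
  obtain ⟨k, rfl⟩ := Nat.exists_eq_add_of_le' hk
  exact Nat.add_one_mul_choose_eq n k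

section L1

variable {n : ℕ}

theorem l1_restr (K : Finset (Fin n)) (x : Fin n → ℝ) : l1 (restr K x) = ∑ i ∈ K, |x i| := by
  simp only [l1, restr, apply_ite abs, abs_zero, sum_ite_mem, univ_inter]

theorem l1_restr_add_l1_restr_compl (K : Finset (Fin n)) (x : Fin n → ℝ) :
    l1 (restr K x) + l1 (restr Kᶜ x) = l1 x := by
  rw [l1_restr, l1_restr, sum_add_sum_compl, l1]

theorem l1_pos {x : Fin n → ℝ} (hx : x ≠ 0) : 0 < l1 x := by
  obtain ⟨i, hi⟩ := Function.ne_iff.1 hx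
  exact sum_pos' (fun j _ => abs_nonneg _) ⟨i, mem_univ i, abs_pos.2 hi⟩

theorem sum_powersetCard_l1_restr (x : Fin n → ℝ) {k : ℕ} (hk : 1 ≤ k) :
    ∑ K ∈ powersetCard k univ, l1 (restr K x) = (n - 1).choose (k - 1) * l1 x := by
  simp only [l1_restr]
  simpa [l1] using sum_powersetCard_sum univ hk fun i => |x i|

theorem mul_card_le_of_forall_l1_restr_le {x : Fin n → ℝ} (hx : x ≠ 0) {C : ℝ} {k : ℕ}
    (hk : 1 ≤ k) (hkn : k ≤ n)
    (h : ∀ K : Finset (Fin n), #K = k → C * l1 (restr K x) ≤ l1 (restr Kᶜ x)) :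
    (C + 1) * k ≤ n := by
  set B : ℝ := Nat.cast ((n - 1).choose (k - 1)) with hBdef
  have hB : 0 < B := Nat.cast_pos.2 (Nat.choose_pos (by omega))
  have hsum : (C + 1) * (B * l1 x) ≤ n.choose k * l1 x := calc
    (C + 1) * (B * l1 x) = ∑ K ∈ powersetCard k univ, (C + 1) * l1 (restr K x) := by
      rw [← mul_sum, sum_powersetCard_l1_restr x hk]
    _ ≤ ∑ K ∈ powersetCard k (univ : Finset (Fin n)), l1 x := by
      refine sum_le_sum fun K hK => ?_
      have := h K (mem_powersetCard.1 hK).2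
      linarith [l1_restr_add_l1_restr_compl K x]
    _ = n.choose k * l1 x := by simp
  have hchoose : (C + 1) * B ≤ n.choose k := le_of_mul_le_mul_right (by linarith) (l1_pos hx)
  have hid : (n : ℝ) * B = n.choose k * k := by
    rw [hBdef]; exact_mod_cast Nat.mul_choose_sub_one_sub_one hk hkn
  nlinarith [mul_le_mul_of_nonneg_right hchoose (Nat.cast_nonneg k : (0 : ℝ) ≤ k)]

end L1

theorem stmt_11 {n : ℕ} (Z : Submodule ℝ (Fin n → ℝ)) (hZ : Z ≠ ⊥)
    (C : ℝ) (hC : 1 ≤ C) (k : ℕ) (hk1 : 1 ≤ k) (hkn : k ≤ n)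
    (h : ∀ w ∈ Z, ∀ K : Finset (Fin n), K.card = k →
      C * l1 (restr K w) ≤ l1 (restr Kᶜ w)) :
    (k : ℝ) ≤ n / (C + 1) := by
  obtain ⟨w, hwZ, hw0⟩ := Submodule.exists_mem_ne_zero_of_ne_bot hZ
  rw [le_div_iff₀ (by linarith)]
  linarith [mul_card_le_of_forall_l1_restr_le hw0 hk1 hkn (h w hwZ)]
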